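/- arXiv:2212.11608 — 3 statements merged into one kernel-verified Lean document; each statement's English description precedes it below -/
import Mathlib

section
/- For n ≥ 2 even, the proportion δ(T) of permutations in S_n whose cycle decomposition contains exactly one transposition and no other cycle of even length equals (n−2)! / (2^{n-1} · ((n−2)/2)!^2); for n ≥ 3 odd, it equals (n−3)! / (2^{n-2} · ((n−3)/2)!^2). -/
/-!
Let `a n` (`oddCyclePermCount n`) count the permutations of an `n`-element set all of whose
cycles have odd length. For such a permutation `σ` and a point `x`, either `σ x = x`, or `x` and
`σ x` can be cut out of the cycle through `x` (it has length at least three), leaving a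
permutation with all cycles odd that fixes `x` and `σ x`; conversely, such a permutation together
with `y = σ x ≠ x` and `w = σ⁻¹ x ∉ {x, y}` rebuilds `σ`. Hence
`a (n + 2) = a (n + 1) + (n + 1) n a n`, and by induction `a (2k) (2^k k!)² = ((2k)!)²` and
`a (2k + 1) = (2k + 1) a (2k)`.

A permutation with exactly one transposition and all other cycles odd is that transposition times
a permutation with all cycles odd on the other `n - 2` points, so there are `C(n, 2) a (n - 2)`
of them, and `δ(T) = a (n - 2) / (2 (n - 2)!)`.
-/

open Equiv Equiv.Perm Finset
open scoped Nat

def oddCyclePermCount : ℕ → ℕ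
  | 0 => 1
  | 1 => 1
  | n + 2 => oddCyclePermCount (n + 1) + (n + 1) * n * oddCyclePermCount n

theorem oddCyclePermCount_two_mul_add_one (k : ℕ) :
    oddCyclePermCount (2 * k + 1) = (2 * k + 1) * oddCyclePermCount (2 * k) := by
  induction k with
  | zero => rfl
  | succ k ih =>
    rw [show 2 * (k + 1) + 1 = 2 * k + 1 + 2 by ring, show 2 * (k + 1) = 2 * k + 2 by ring]
    simp only [oddCyclePermCount, ih]
    ring

theorem oddCyclePermCount_two_mul_add_two (k : ℕ) :
    oddCyclePermCount (2 * k + 2) = (2 * k + 1) ^ 2 * oddCyclePermCount (2 * k) := by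
  rw [oddCyclePermCount, oddCyclePermCount_two_mul_add_one]
  ring

theorem oddCyclePermCount_two_mul_mul_sq (k : ℕ) :
    oddCyclePermCount (2 * k) * (2 ^ k * k !) ^ 2 = (2 * k)! ^ 2 := by
  induction k with
  | zero => rfl
  | succ k ih =>
    rw [show 2 * (k + 1) = 2 * k + 2 by ring, oddCyclePermCount_two_mul_add_two]
    simp only [Nat.factorial_succ]
    linear_combination (2 * (2 * k + 1) * (k + 1)) ^ 2 * ih

theorem oddCyclePermCount_two_mul_div (k : ℕ) :
    (oddCyclePermCount (2 * k) : ℚ) / (2 * (2 * k)!) =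
      (2 * k)! / (2 ^ (2 * k + 1) * k ! ^ 2) := by
  have h := congrArg (Nat.cast : ℕ → ℚ) (oddCyclePermCount_two_mul_mul_sq k)
  push_cast at h
  rw [div_eq_div_iff (by positivity) (by positivity)]
  linear_combination 2 * h

theorem Multiset.count_add_singleton_two_eq_one_and_odd_iff (s : Multiset ℕ) :
    (s + {2}).count 2 = 1 ∧ (∀ m ∈ s + {2}, m ≠ 2 → Odd m) ↔ ∀ m ∈ s, Odd m := by
  simp only [Multiset.count_add, Multiset.count_singleton_self, Nat.add_eq_right,
    Multiset.count_eq_zero, Multiset.mem_add, Multiset.mem_singleton, or_imp, forall_and]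
  constructor
  · exact fun ⟨h2, hodd, _⟩ m hm => hodd m hm (by rintro rfl; exact h2 hm)
  · exact fun hodd => ⟨fun h2 => Nat.not_odd_iff_even.2 even_two (hodd 2 h2),
      fun m hm _ => hodd m hm, fun _ h => absurd h⟩

namespace Equiv.Perm

variable {α : Type*} [DecidableEq α] [Fintype α]

theorem support_mul_swap_of_mem_of_notMem {f : Perm α} {x b : α} (hx : x ∈ f.support)
    (hb : b ∉ f.support) : (f * swap x b).support = insert b f.support := by
  have hbx : b ≠ x := by rintro rfl; exact hb hx
  rw [notMem_support] at hb
  rw [mem_support] at hx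
  ext z
  rcases eq_or_ne z x with rfl | hzx
  · simp [hb, hbx, hx]
  rcases eq_or_ne z b with rfl | hzb
  · simpa [hb] using fun h : f x = z => hzx (f.injective (h.trans hb.symm)).symm
  · simp [swap_apply_of_ne_of_ne hzx hzb, hzb]

theorem IsCycle.mul_swap_of_mem_of_notMem {f : Perm α} (hf : f.IsCycle) {x b : α}
    (hx : x ∈ f.support) (hb : b ∉ f.support) : (f * swap x b).IsCycle := by
  set g := f * swap x b
  have hbx : b ≠ x := by rintro rfl; exact hb hx
  have hgx : g x = b := by simp [g, notMem_support.1 hb]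
  have hgb : g b = f x := by simp [g]
  -- `g` agrees with `f` off `{x, b}` and sends `x ↦ b ↦ f x`: it still runs through `f`'s cycle
  have hreach : ∀ k : ℕ, g.SameCycle x ((f ^ k) x) := by
    intro k
    induction k with
    | zero => rfl
    | succ k ih =>
      rw [pow_succ', mul_apply]
      by_cases hk : (f ^ k) x = x
      · rw [hk, ← hgb, ← hgx]
        exact sameCycle_apply_right.2 (sameCycle_apply_right.2 SameCycle.rfl)
      · have hkb : (f ^ k) x ≠ b := fun h => hb (h ▸ pow_apply_mem_support.2 hx)
        have : g ((f ^ k) x) = f ((f ^ k) x) := by simp [g, swap_apply_of_ne_of_ne hk hkb]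
        exact this ▸ sameCycle_apply_right.2 ih
  refine ⟨x, by rw [hgx]; exact hbx, fun z hz => ?_⟩
  rw [← mem_support, show g.support = insert b f.support from
    support_mul_swap_of_mem_of_notMem hx hb, mem_insert] at hz
  rcases hz with rfl | hz
  · exact hgx ▸ sameCycle_apply_right.2 SameCycle.rfl
  · obtain ⟨k, -, rfl⟩ :=
      (hf.sameCycle (mem_support.1 hx) (mem_support.1 hz)).exists_nat_pow_eq
    exact hreach k

/- When `τ` fixes `x` and `y`, the permutation `τ * (swap w x * swap x y)` is `τ` with `x, y`
inserted after `w` in its cycle: `w ↦ x ↦ y ↦ τ w`. -/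
theorem cycleType_mul_swap_mul_swap_of_apply_eq {τ : Perm α} {w x y : α}
    (hwx : w ≠ x) (hwy : w ≠ y) (hxy : x ≠ y) (hw : τ w = w) (hx : τ x = x)
    (hy : τ y = y) : (τ * (swap w x * swap x y)).cycleType = τ.cycleType + {3} := by
  have hdisj : τ.Disjoint (swap w x * swap x y) := by
    rw [disjoint_iff_disjoint_support, support_swap_mul_swap (by simp [*])]
    simp [Finset.disjoint_right, hw, hx, hy]
  have h3 : (swap w x * swap x y).IsThreeCycle := by
    rw [swap_comm w x]; exact isThreeCycle_swap_mul_swap_same hwx.symm hxy hwy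
  rw [hdisj.cycleType_mul, h3]

theorem cycleType_mul_swap_mul_swap_of_apply_ne {τ : Perm α} {w x y : α}
    (hxy : x ≠ y) (hw : τ w ≠ w) (hx : τ x = x) (hy : τ y = y) :
    ∃ (s : Multiset ℕ) (L : ℕ), τ.cycleType = s + {L} ∧
      (τ * (swap w x * swap x y)).cycleType = s + {L + 2} := by
  set c := τ.cycleOf w
  have hc : c.IsCycle := isCycle_cycleOf τ hw
  have hcτ : c ∈ τ.cycleFactorsFinset := cycleOf_mem_cycleFactorsFinset_iff.2 (mem_support.2 hw)
  have hρc : (τ * c⁻¹).Disjoint c := disjoint_mul_inv_of_mem_cycleFactorsFinset hcτ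
  have hxc : x ∉ c.support := fun h => mem_support.1 (support_cycleOf_le τ w h) hx
  have hyc : y ∉ c.support := fun h => mem_support.1 (support_cycleOf_le τ w h) hy
  have hwc : w ∈ c.support := mem_support_cycleOf_iff.2 ⟨SameCycle.rfl, mem_support.2 hw⟩
  have hx' : x ∈ (c * swap w x).support := by
    rw [support_mul_swap_of_mem_of_notMem hwc hxc]; exact mem_insert_self x _
  have hy' : y ∉ (c * swap w x).support := by
    rw [support_mul_swap_of_mem_of_notMem hwc hxc]; simp [hxy.symm, hyc]
  have hcycle : (c * swap w x * swap x y).IsCycle :=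
    (hc.mul_swap_of_mem_of_notMem hwc hxc).mul_swap_of_mem_of_notMem hx' hy'
  have hsupp : (c * swap w x * swap x y).support = insert y (insert x c.support) := by
    rw [support_mul_swap_of_mem_of_notMem hx' hy', support_mul_swap_of_mem_of_notMem hwc hxc]
  have hdisj : (τ * c⁻¹).Disjoint (c * swap w x * swap x y) := by
    have hfix : ∀ z ∉ c.support, (τ * c⁻¹) z = τ z := fun z hz => by
      rw [mul_apply, inv_eq_iff_eq.2 (notMem_support.1 hz).symm]
    rw [disjoint_iff_disjoint_support, hsupp]
    refine Finset.disjoint_insert_right.2 ⟨by simp [hfix y hyc, hy],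
      Finset.disjoint_insert_right.2 ⟨by simp [hfix x hxc, hx], ?_⟩⟩
    exact disjoint_iff_disjoint_support.1 hρc
  refine ⟨(τ * c⁻¹).cycleType, #c.support, ?_, ?_⟩
  · rw [← hc.cycleType, ← hρc.cycleType_mul, inv_mul_cancel_right]
  · rw [show τ * (swap w x * swap x y) = τ * c⁻¹ * (c * swap w x * swap x y) by group,
      hdisj.cycleType_mul, hcycle.cycleType, hsupp, card_insert_of_notMem (by simp [hxy.symm, hyc]),
      card_insert_of_notMem hxc]

theorem cycleType_mul_swap_of_apply_eq {τ : Perm α} {a b : α} (hab : a ≠ b) (ha : τ a = a)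
    (hb : τ b = b) : (τ * swap a b).cycleType = τ.cycleType + {2} := by
  have hdisj : τ.Disjoint (swap a b) := by
    rw [disjoint_iff_disjoint_support, support_swap hab]
    simp [ha, hb]
  rw [hdisj.cycleType_mul, (isCycle_swap hab).cycleType, card_support_swap hab]

theorem swap_mem_cycleFactorsFinset_mul_swap {τ : Perm α} {a b : α} (hab : a ≠ b)
    (ha : τ a = a) (hb : τ b = b) : swap a b ∈ (τ * swap a b).cycleFactorsFinset := by
  refine mem_cycleFactorsFinset_iff.2 ⟨isCycle_swap hab, fun z hz => ?_⟩
  rw [support_swap hab, mem_insert, mem_singleton] at hz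
  rcases hz with rfl | rfl <;> simp [ha, hb]

theorem mul_swap_apply_eq_of_swap_mem_cycleFactorsFinset {σ : Perm α} {a b : α} (hab : a ≠ b)
    (h : swap a b ∈ σ.cycleFactorsFinset) : (σ * swap a b) a = a ∧ (σ * swap a b) b = b := by
  have hσ := (mem_cycleFactorsFinset_iff.1 h).2
  rw [support_swap hab] at hσ
  have ha := hσ a (by simp)
  have hb := hσ b (by simp)
  simp only [swap_apply_left, swap_apply_right] at ha hb
  simp [← ha, ← hb]

theorem count_cycleType_eq_card_filter (σ : Perm α) (k : ℕ) :
    σ.cycleType.count k = #{c ∈ σ.cycleFactorsFinset | c.cycleType = {k}} := by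
  rw [cycleType_def, Multiset.count_map, card_def, filter_val]
  congr 1
  refine Multiset.filter_congr fun c hc => ?_
  rw [(mem_cycleFactorsFinset_iff.1 hc).1.cycleType, Multiset.singleton_inj, eq_comm]
  rfl

def AllCyclesOdd (σ : Perm α) : Prop := ∀ m ∈ σ.cycleType, Odd m

instance : DecidablePred (AllCyclesOdd (α := α)) :=
  fun σ => inferInstanceAs (Decidable (∀ m ∈ σ.cycleType, Odd m))

theorem allCyclesOdd_mul_swap_mul_swap_iff {τ : Perm α} {w x y : α}
    (hwx : w ≠ x) (hwy : w ≠ y) (hxy : x ≠ y) (hx : τ x = x) (hy : τ y = y) :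
    AllCyclesOdd (τ * (swap w x * swap x y)) ↔ AllCyclesOdd τ := by
  by_cases hw : τ w = w
  · simp [AllCyclesOdd, cycleType_mul_swap_mul_swap_of_apply_eq hwx hwy hxy hw hx hy,
      or_imp, forall_and, Nat.odd_iff]
  · obtain ⟨s, L, hτ, hσ⟩ := cycleType_mul_swap_mul_swap_of_apply_ne hxy hw hx hy
    simp [AllCyclesOdd, hτ, hσ, or_imp, forall_and, Nat.odd_add]

theorem AllCyclesOdd.apply_apply_ne {σ : Perm α} (hσ : AllCyclesOdd σ) {x : α}
    (hx : σ x ≠ x) : σ (σ x) ≠ x := by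
  intro h
  have hswap : swap x (σ x) ∈ σ.cycleFactorsFinset := by
    refine mem_cycleFactorsFinset_iff.2 ⟨isCycle_swap (Ne.symm hx), fun a ha => ?_⟩
    rw [support_swap (Ne.symm hx), mem_insert, mem_singleton] at ha
    rcases ha with rfl | rfl <;> simp [h]
  have h2 : 2 ∈ σ.cycleType := by
    rw [cycleType_def]
    exact Multiset.mem_map.2 ⟨_, hswap, card_support_swap (Ne.symm hx)⟩
  exact Nat.not_odd_iff_even.2 even_two (hσ 2 h2)

theorem card_allCyclesOdd_fixing_eq_card_compl (s : Finset α) :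
    #{σ : Perm α | (∀ a ∈ s, σ a = a) ∧ AllCyclesOdd σ} =
      #{τ : Perm {a // a ∉ s} | AllCyclesOdd τ} := by
  have hodd (τ : Perm {a // a ∉ s}) : AllCyclesOdd (ofSubtype τ) ↔ AllCyclesOdd τ := by
    simp only [AllCyclesOdd, cycleType_ofSubtype]
  symm
  refine card_bij (fun τ _ => ofSubtype τ) (fun τ hτ => ?_)
    (fun _ _ _ _ h => ofSubtype_injective h) (fun σ hσ => ?_)
  · simp only [mem_filter, mem_univ, true_and] at hτ ⊢
    exact ⟨fun a ha => ofSubtype_apply_of_not_mem τ (not_not.2 ha), (hodd τ).2 hτ⟩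
  · simp only [mem_filter, mem_univ, true_and] at hσ ⊢
    have hof := congrArg Subtype.val <| (Perm.subtypeEquivSubtypePerm (· ∉ s)).apply_symm_apply
      ⟨σ, fun a ha => hσ.1 a (not_not.1 ha)⟩
    simp only [Perm.subtypeEquivSubtypePerm_apply_coe] at hof
    exact ⟨_, (hodd _).1 (by rw [hof]; exact hσ.2), hof⟩

theorem card_allCyclesOdd_apply_eq_and_apply_eq {x y w : α} (hyx : y ≠ x) (hwx : w ≠ x)
    (hyw : y ≠ w) :
    #{σ : Perm α | AllCyclesOdd σ ∧ σ x = y ∧ σ w = x} =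
      #{τ : Perm α | (∀ a ∈ ({x, y} : Finset α), τ a = a) ∧ AllCyclesOdd τ} := by
  have hodd (τ : Perm α) := allCyclesOdd_mul_swap_mul_swap_iff (τ := τ) hwx hyw.symm hyx.symm
  refine card_nbij' (· * (swap w x * swap x y)⁻¹) (· * (swap w x * swap x y))
    (fun σ hσ => ?_) (fun τ hτ => ?_) (fun σ _ => inv_mul_cancel_right σ _)
    (fun τ _ => mul_inv_cancel_right τ _)
  · simp only [coe_filter, mem_univ, true_and, Set.mem_ofPred_eq, mem_insert, mem_singleton,
      forall_eq_or_imp, forall_eq] at hσ ⊢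
    obtain ⟨hσodd, hσx, hσw⟩ := hσ
    have hτx : (σ * (swap w x * swap x y)⁻¹) x = x := by
      simp [swap_apply_of_ne_of_ne hwx hyw.symm, hσw]
    have hτy : (σ * (swap w x * swap x y)⁻¹) y = y := by
      simp [swap_apply_of_ne_of_ne hyw hyx, hσx]
    refine ⟨⟨hτx, hτy⟩, (hodd _ hτx hτy).1 ?_⟩
    rwa [inv_mul_cancel_right]
  · simp only [coe_filter, mem_univ, true_and, Set.mem_ofPred_eq, mem_insert, mem_singleton,
      forall_eq_or_imp, forall_eq] at hτ ⊢
    obtain ⟨⟨hτx, hτy⟩, hτodd⟩ := hτ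
    refine ⟨(hodd τ hτx hτy).2 hτodd, ?_, ?_⟩
    · simp [swap_apply_of_ne_of_ne hyw hyx, hτy]
    · simp [swap_apply_of_ne_of_ne hwx hyw.symm, hτx]

theorem card_allCyclesOdd_apply_ne_eq_sum (x : α) :
    #{σ : Perm α | AllCyclesOdd σ ∧ σ x ≠ x} =
      ∑ p ∈ (univ.erase x).offDiag,
        #{τ : Perm α | (∀ a ∈ ({x, p.1} : Finset α), τ a = a) ∧ AllCyclesOdd τ} := by
  rw [card_eq_sum_card_fiberwise (f := fun σ => (σ x, σ⁻¹ x)) (t := (univ.erase x).offDiag)]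
  · refine sum_congr rfl fun ⟨y, w⟩ hp => ?_
    simp only [mem_offDiag, mem_erase, mem_univ, and_true] at hp
    rw [← card_allCyclesOdd_apply_eq_and_apply_eq hp.1 hp.2.1 hp.2.2, filter_filter]
    congr 1
    refine filter_congr fun σ _ => ?_
    rw [Prod.mk.injEq, inv_eq_iff_eq]
    constructor
    · rintro ⟨⟨hσ, -⟩, hσx, hσw⟩
      exact ⟨hσ, hσx, hσw.symm⟩
    · rintro ⟨hσ, hσx, hσw⟩
      exact ⟨⟨hσ, hσx ▸ hp.1⟩, hσx, hσw.symm⟩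
  · intro σ hσ
    simp only [coe_filter, mem_univ, true_and, Set.mem_ofPred_eq, coe_offDiag, Set.mem_offDiag,
      coe_erase, coe_univ, Set.mem_sdiff, Set.mem_univ, Set.mem_singleton_iff] at hσ ⊢
    obtain ⟨hσodd, hσx⟩ := hσ
    refine ⟨hσx, fun h => hσx (by simpa using congrArg σ h.symm), fun h => ?_⟩
    exact hσodd.apply_apply_ne hσx (by simpa using congrArg σ h)

theorem card_allCyclesOdd :
    #{σ : Perm α | AllCyclesOdd σ} = oddCyclePermCount (Fintype.card α) := by
  induction h : Fintype.card α using Nat.strong_induction_on generalizing α with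
  | _ n ih =>
  match n, h with
  | 0, h | 1, h =>
    have : Subsingleton α := Fintype.card_le_one_iff_subsingleton.1 (by omega)
    rw [filter_true_of_mem fun σ _ => by simp [Subsingleton.elim σ 1, AllCyclesOdd], card_univ,
      Fintype.card_perm, h]
    rfl
  | n + 2, h =>
    obtain ⟨x⟩ : Nonempty α := Fintype.card_pos_iff.1 (by omega)
    have hfix (s : Finset α) (hs : s.Nonempty) :
        #{σ : Perm α | (∀ a ∈ s, σ a = a) ∧ AllCyclesOdd σ} =
          oddCyclePermCount (n + 2 - #s) := by
      rw [card_allCyclesOdd_fixing_eq_card_compl]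
      exact ih _ (by have := hs.card_pos; omega) (by simp [Fintype.card_subtype_compl, h])
    have hfixed : #{σ : Perm α | AllCyclesOdd σ ∧ σ x = x} = oddCyclePermCount (n + 1) := by
      simpa [and_comm] using hfix {x} (singleton_nonempty x)
    have hmoved : #{σ : Perm α | AllCyclesOdd σ ∧ σ x ≠ x} =
        (n + 1) * n * oddCyclePermCount n := by
      have hterm (p) (hp : p ∈ (univ.erase x).offDiag) :
          #{τ : Perm α | (∀ a ∈ ({x, p.1} : Finset α), τ a = a) ∧ AllCyclesOdd τ} =
            oddCyclePermCount n := by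
        rw [hfix _ (insert_nonempty _ _), card_pair (mem_erase.1 (mem_offDiag.1 hp).1).1.symm,
          Nat.add_sub_cancel]
      rw [card_allCyclesOdd_apply_ne_eq_sum, sum_congr rfl hterm, sum_const, offDiag_card,
        card_erase_of_mem (mem_univ x), card_univ, h, smul_eq_mul, ← Nat.mul_sub_one]
      rfl
    rw [← card_filter_add_card_filter_not (fun σ : Perm α => σ x = x), filter_filter,
      filter_filter, hfixed, hmoved]
    rfl

theorem card_allCyclesOdd_fixing (s : Finset α) :
    #{σ : Perm α | (∀ a ∈ s, σ a = a) ∧ AllCyclesOdd σ} =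
      oddCyclePermCount (Fintype.card α - #s) := by
  rw [card_allCyclesOdd_fixing_eq_card_compl, card_allCyclesOdd, Fintype.card_subtype_compl,
    Fintype.card_coe]

theorem card_filter_swap_mem_cycleFactorsFinset {a b : α} (hab : a ≠ b) :
    #{σ : Perm α | (σ.cycleType.count 2 = 1 ∧ ∀ m ∈ σ.cycleType, m ≠ 2 → Odd m) ∧
        swap a b ∈ σ.cycleFactorsFinset} =
      oddCyclePermCount (Fintype.card α - 2) := by
  have hcount := card_allCyclesOdd_fixing {a, b}
  rw [card_pair hab] at hcount
  rw [← hcount]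
  have hT (τ : Perm α) (ha : τ a = a) (hb : τ b = b) :
      ((τ * swap a b).cycleType.count 2 = 1 ∧
        ∀ m ∈ (τ * swap a b).cycleType, m ≠ 2 → Odd m) ↔ AllCyclesOdd τ := by
    rw [cycleType_mul_swap_of_apply_eq hab ha hb]
    exact Multiset.count_add_singleton_two_eq_one_and_odd_iff _
  refine card_nbij' (· * swap a b) (· * swap a b) (fun σ hσ => ?_) (fun τ hτ => ?_)
    (fun σ _ => mul_swap_mul_self a b σ) (fun τ _ => mul_swap_mul_self a b τ)
  · simp only [coe_filter, mem_univ, true_and, Set.mem_ofPred_eq, mem_insert, mem_singleton,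
      forall_eq_or_imp, forall_eq] at hσ ⊢
    obtain ⟨ha, hb⟩ := mul_swap_apply_eq_of_swap_mem_cycleFactorsFinset hab hσ.2
    refine ⟨⟨ha, hb⟩, (hT _ ha hb).1 ?_⟩
    rw [mul_swap_mul_self]
    exact hσ.1
  · simp only [coe_filter, mem_univ, true_and, Set.mem_ofPred_eq, mem_insert, mem_singleton,
      forall_eq_or_imp, forall_eq] at hτ ⊢
    obtain ⟨⟨ha, hb⟩, hodd⟩ := hτ
    exact ⟨(hT _ ha hb).2 hodd, swap_mem_cycleFactorsFinset_mul_swap hab ha hb⟩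

theorem card_count_cycleType_two_eq_one (h : 2 ≤ Fintype.card α) :
    #{σ : Perm α | σ.cycleType.count 2 = 1 ∧ ∀ m ∈ σ.cycleType, m ≠ 2 → Odd m} =
      (Fintype.card α).choose 2 * oddCyclePermCount (Fintype.card α - 2) := by
  set T : Finset (Perm α) :=
    {σ | σ.cycleType.count 2 = 1 ∧ ∀ m ∈ σ.cycleType, m ≠ 2 → Odd m}
  set S : Finset (Perm α) := {t | t.cycleType = {2}}
  let r : Perm α → Perm α → Prop := fun σ t => t ∈ σ.cycleFactorsFinset
  have habove (σ) (hσ : σ ∈ T) : #(S.bipartiteAbove r σ) = 1 := by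
    rw [← (mem_filter.1 hσ).2.1, count_cycleType_eq_card_filter]
    congr 1
    ext t
    simp [S, r, bipartiteAbove, and_comm]
  have hbelow (t : Perm α) (ht : t ∈ S) :
      #(T.bipartiteBelow r t) = oddCyclePermCount (Fintype.card α - 2) := by
    have ht2 : #t.support = 2 := by rw [← sum_cycleType, (mem_filter.1 ht).2]; rfl
    obtain ⟨a, b, hab, rfl⟩ := card_support_eq_two.1 ht2
    rw [bipartiteBelow, filter_filter]
    exact card_filter_swap_mem_cycleFactorsFinset hab
  calc #T = ∑ σ ∈ T, #(S.bipartiteAbove r σ) := by simp [sum_congr rfl habove]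
    _ = ∑ t ∈ S, #(T.bipartiteBelow r t) := sum_card_bipartiteAbove_eq_sum_card_bipartiteBelow _
    _ = _ := by
      rw [sum_congr rfl hbelow, sum_const, smul_eq_mul, card_of_cycleType_singleton le_rfl h]
      simp

theorem card_count_cycleType_two_eq_one_div_factorial {n : ℕ} (hα : Fintype.card α = n + 2) :
    (#{σ : Perm α | σ.cycleType.count 2 = 1 ∧ ∀ m ∈ σ.cycleType, m ≠ 2 → Odd m} : ℚ) /
      (n + 2)! = oddCyclePermCount n / (2 * n !) := by
  rw [card_count_cycleType_two_eq_one (by omega), hα, Nat.add_sub_cancel]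
  push_cast [Nat.cast_choose_two, Nat.factorial_succ]
  field_simp
  ring

end Equiv.Perm

/-- The proportion of permutations of `S_n` whose cycle decomposition contains
exactly one transposition and no other cycle of even length equals
`(n-2)!/(2^{n-1} ((n-2)/2)!²)` for `n` even, and `(n-3)!/(2^{n-2} ((n-3)/2)!²)`
for `n` odd. -/
theorem stmt_4 (n : ℕ) (hn : 2 ≤ n) :
    (Even n →
      ((Finset.univ.filter fun σ : Equiv.Perm (Fin n) =>
          σ.cycleType.count 2 = 1 ∧ ∀ m ∈ σ.cycleType, m ≠ 2 → Odd m).card : ℚ)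
          / (Nat.factorial n) =
        (Nat.factorial (n - 2) : ℚ) /
          (2 ^ (n - 1) * (Nat.factorial ((n - 2) / 2)) ^ 2)) ∧
    (Odd n →
      ((Finset.univ.filter fun σ : Equiv.Perm (Fin n) =>
          σ.cycleType.count 2 = 1 ∧ ∀ m ∈ σ.cycleType, m ≠ 2 → Odd m).card : ℚ)
          / (Nat.factorial n) =
        (Nat.factorial (n - 3) : ℚ) /
          (2 ^ (n - 2) * (Nat.factorial ((n - 3) / 2)) ^ 2)) := by
  obtain ⟨m, rfl⟩ := Nat.exists_eq_add_of_le' hn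
  have hratio := card_count_cycleType_two_eq_one_div_factorial (Fintype.card_fin (m + 2))
  refine ⟨fun he => ?_, fun ho => ?_⟩
  · obtain ⟨k, rfl⟩ : ∃ k, m = 2 * k := ⟨m / 2, by obtain ⟨j, hj⟩ := he; omega⟩
    rw [hratio, oddCyclePermCount_two_mul_div, show 2 * k + 2 - 2 = 2 * k by omega,
      show 2 * k + 2 - 1 = 2 * k + 1 by omega, Nat.mul_div_cancel_left k two_pos]
  · obtain ⟨k, rfl⟩ : ∃ k, m = 2 * k + 1 := ⟨m / 2, by obtain ⟨j, hj⟩ := ho; omega⟩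
    rw [hratio, show 2 * k + 1 + 2 - 3 = 2 * k by omega,
      show 2 * k + 1 + 2 - 2 = 2 * k + 1 by omega, Nat.mul_div_cancel_left k two_pos,
      ← oddCyclePermCount_two_mul_div,
      oddCyclePermCount_two_mul_add_one, Nat.factorial_succ]
    push_cast
    field_simp
end

section
/- Let G be a transitive subgroup of S_n (n ≥ 2) that contains a transposition and contains a p-cycle for some prime p > n/2. Then G = S_n. -/
/-!
The subgroup of `G` fixing every point outside the support of the `p`-cycle acts transitively on
that support, a set of prime size `p`, hence primitively. So every translate of a block of `G`
meets the support in at most one point or contains it. Since `p > n/2`, in the first case the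
block has more than `n/2` translates and is a singleton, in the second it has more than `n/2`
points and is everything: `G` is primitive. A primitive permutation group containing a
transposition is the full symmetric group (Jordan).
-/

open Equiv MulAction

theorem Equiv.Perm.isPreprimitive_of_isCycle_mem_of_card_lt {α : Type*} [Fintype α]
    [DecidableEq α] {G : Subgroup (Perm α)} [IsPretransitive G α] {g : Perm α}
    (hgc : g.IsCycle) (hg : g ∈ G) (hp : g.support.card.Prime)
    (hcard : Nat.card α < 2 * g.support.card) :
    IsPreprimitive G α := by
  set s : Set α := (g.support : Set α)ᶜ
  let f := SubMulAction.ofFixingSubgroup_equivariantMap G s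
  have hrange : (Set.range f).ncard = g.support.card := by
    have : Set.range f = sᶜ := Subtype.range_coe
    rw [this, compl_compl, Set.ncard_coe_finset]
  have := isPretransitive_of_isCycle_mem hgc hg
  have : IsPreprimitive (fixingSubgroup G s) (SubMulAction.ofFixingSubgroup G s) := by
    apply IsPreprimitive.of_prime_card
    rwa [← Nat.card_range_of_injective SubMulAction.ofFixingSubgroup_equivariantMap_injective,
      Nat.card_coe_set_eq, hrange]
  exact IsPreprimitive.of_card_lt (f := f) (by rwa [hrange])

theorem stmt_8_general (n : ℕ) (G : Subgroup (Equiv.Perm (Fin n)))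
    (htrans : ∀ i j : Fin n, ∃ g ∈ G, g i = j)
    (hswap : ∃ g ∈ G, g.IsSwap)
    (p : ℕ) (hp : p.Prime) (hp2 : n < 2 * p)
    (hcycle : ∃ g ∈ G, g.IsCycle ∧ g.support.card = p) :
    G = ⊤ := by
  obtain ⟨σ, hσG, hσ⟩ := hswap
  obtain ⟨c, hcG, hc, rfl⟩ := hcycle
  have : IsPretransitive G (Fin n) := ⟨fun i j ↦ by
    obtain ⟨g, hg, rfl⟩ := htrans i j
    exact ⟨⟨g, hg⟩, rfl⟩⟩
  have hprim := Perm.isPreprimitive_of_isCycle_mem_of_card_lt hc hcG hp (by rwa [Nat.card_fin])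
  exact Perm.subgroup_eq_top_of_isPreprimitive_of_isSwap_mem hprim σ hσ hσG

/-- A transitive subgroup of `S_n` containing a transposition and a `p`-cycle
for some prime `p > n/2` is all of `S_n`. -/
theorem stmt_8 (n : ℕ) (hn : 2 ≤ n) (G : Subgroup (Equiv.Perm (Fin n)))
    (htrans : ∀ i j : Fin n, ∃ g ∈ G, g i = j)
    (hswap : ∃ g ∈ G, g.IsSwap)
    (p : ℕ) (hp : p.Prime) (hp2 : n < 2 * p)
    (hcycle : ∃ g ∈ G, g.IsCycle ∧ g.support.card = p) :
    G = ⊤ :=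
  stmt_8_general n G htrans hswap p hp hp2 hcycle
end

section
/- If G is a primitive subgroup of S_n containing a transposition, then G = S_n. -/
/-!
Call `a ~ b` when the transposition `(a b)` lies in `G`. Since `(a c) = (a b)(b c)(a b)` and
`g (a b) g⁻¹ = (ga gb)`, this is a `G`-invariant equivalence relation, so its classes are
blocks. A transposition `(x y) ∈ G` makes the class of `x` non-trivial, so by primitivity it is
everything: `G` contains every transposition, and these generate `S_n`.
-/

open Equiv MulAction Pointwise

namespace MulAction

variable {G X : Type*} [Group G] [MulAction G X] {r : Setoid X}

theorem smul_setOf_rel (hr : ∀ (g : G) {a b : X}, r a b → r (g • a) (g • b))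
    (g : G) (a : X) : g • {b | r a b} = {b | r (g • a) b} := by
  ext b
  rw [Set.mem_smul_set_iff_inv_smul_mem, Set.mem_ofPred_eq, Set.mem_ofPred_eq]
  exact ⟨fun h ↦ by simpa using hr g h, fun h ↦ by simpa using hr g⁻¹ h⟩

theorem isBlock_setOf_rel (hr : ∀ (g : G) {a b : X}, r a b → r (g • a) (g • b)) (a : X) :
    IsBlock G {b | r a b} := by
  rw [isBlock_iff_smul_eq_or_disjoint]
  intro g
  rw [smul_setOf_rel hr]
  refine or_iff_not_imp_right.mpr fun hmeet ↦ ?_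
  obtain ⟨c, hgc, hc⟩ := Set.not_disjoint_iff.mp hmeet
  have hga : r (g • a) a := r.trans hgc (r.symm hc)
  ext b
  exact ⟨r.trans (r.symm hga), r.trans hga⟩

end MulAction

namespace Subgroup

variable {α : Type*} [DecidableEq α] (G : Subgroup (Perm α))

def swapSetoid : Setoid α where
  r a b := swap a b ∈ G
  iseqv :=
    { refl := fun a ↦ by rw [swap_self, ← Perm.one_def]; exact G.one_mem
      symm := fun h ↦ by rwa [swap_comm]
      trans := SubmonoidClass.swap_mem_trans G }

variable {G}

theorem swapSetoid_iff {a b : α} : G.swapSetoid a b ↔ swap a b ∈ G := Iff.rfl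

theorem swap_apply_mem_of_swap_mem {g : Perm α} (hg : g ∈ G) {a b : α} (h : swap a b ∈ G) :
    swap (g a) (g b) ∈ G := by
  rw [swap_apply_apply]
  exact G.mul_mem (G.mul_mem hg h) (G.inv_mem hg)

variable (G)

theorem isBlock_setOf_swap_mem (a : α) : IsBlock G {b | swap a b ∈ G} :=
  isBlock_setOf_rel (r := G.swapSetoid)
    (fun g _ _ h ↦ swapSetoid_iff.mpr (swap_apply_mem_of_swap_mem g.2 h)) a

theorem eq_top_of_setOf_swap_mem_eq_univ [Finite α] {a : α}
    (h : {b | swap a b ∈ G} = Set.univ) : G = ⊤ := by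
  have hmem : ∀ b, swap a b ∈ G := Set.eq_univ_iff_forall.mp h
  have hswap : ∀ b c, swap b c ∈ G := fun b c ↦
    SubmonoidClass.swap_mem_trans G (swap_comm a b ▸ hmem b) (hmem c)
  rw [eq_top_iff, ← Perm.closure_isSwap, closure_le]
  rintro _ ⟨b, c, -, rfl⟩
  exact hswap b c

end Subgroup

theorem stmt_9_general (n : ℕ) (G : Subgroup (Equiv.Perm (Fin n)))
    (hblocks : ∀ B : Set (Fin n), MulAction.IsBlock G B →
      B.Subsingleton ∨ B = Set.univ)
    (hswap : ∃ g ∈ G, g.IsSwap) :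
    G = ⊤ := by
  obtain ⟨_, hxy, x, y, hne, rfl⟩ := hswap
  have hclass : ¬{b | swap x b ∈ G}.Subsingleton := fun hsub ↦
    hne (hsub (G.swapSetoid.refl x) hxy)
  exact G.eq_top_of_setOf_swap_mem_eq_univ
    ((hblocks _ (G.isBlock_setOf_swap_mem x)).resolve_left hclass)

/-- Jordan's theorem: a primitive subgroup of `S_n` containing a transposition
is all of `S_n`.  Primitivity is stated as: `G` is transitive and every block
for the action of `G` on `Fin n` is trivial. -/
theorem stmt_9 (n : ℕ) (hn : 2 ≤ n) (G : Subgroup (Equiv.Perm (Fin n)))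
    (htrans : ∀ i j : Fin n, ∃ g ∈ G, g i = j)
    (hblocks : ∀ B : Set (Fin n), MulAction.IsBlock G B →
      B.Subsingleton ∨ B = Set.univ)
    (hswap : ∃ g ∈ G, g.IsSwap) :
    G = ⊤ :=
  stmt_9_general n G hblocks hswap
end
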